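/- Let f : X × Y → Z be a function valued in a Tychonoff (completely regular Hausdorff) space Z such that for every continuous g : Z → [0,1] the composition g ∘ f is quasicontinuous. Then f is quasicontinuous. -/
import Mathlib


open unitInterval

/-- Quasicontinuity of a function between topological spaces. -/
def Quasicontinuous {X Y : Type*} [TopologicalSpace X] [TopologicalSpace Y] (f : X → Y) : Prop :=
  ∀ x : X, ∀ U : Set X, IsOpen U → x ∈ U → ∀ V : Set Y, IsOpen V → f x ∈ V →
    ∃ W : Set X, IsOpen W ∧ W.Nonempty ∧ W ⊆ U ∧ f '' W ⊆ V

theorem quasicontinuous_of_compositions_quasicontinuous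
    {X Y Z : Type*} [TopologicalSpace X] [TopologicalSpace Y] [TopologicalSpace Z]
    [CompletelyRegularSpace Z] [T2Space Z]
    (f : X × Y → Z)
    (h : ∀ g : Z → I, Continuous g → Quasicontinuous (g ∘ f)) :
    Quasicontinuous f := by
  intro x U hU hxU V hV hfxV
  obtain ⟨g, hg, hg0, hg1⟩ := CompletelyRegularSpace.completely_regular (f x) Vᶜ
    hV.isClosed_compl (by simpa using hfxV)
  have hVopen : IsOpen {t : I | t ≠ 1} := isOpen_compl_singleton
  obtain ⟨W, hWopen, hWne, hWU, hWV⟩ := h g hg x U hU hxU {t : I | t ≠ 1} hVopen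
    (by simp [Function.comp, hg0])
  refine ⟨W, hWopen, hWne, hWU, ?_⟩
  rintro z ⟨w, hw, rfl⟩
  by_contra hzV
  exact hWV ⟨w, hw, rfl⟩ (hg1 hzV)
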